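/- Let H be an arrangement with simplification H̃, π : L_{H̃} → L_H the rank-preserving surjection of flat lattices sending a flat of H̃ to the minimal flat of H containing it, and E = π_* A_{H̃} the pushforward of the structure sheaf. Then for every flat F of H: (a) the costalk E(F,∂F) is a free A_H(F)-module generated in degree 2·rk F with basis {e_E : E ∈ π^{-1}(F)} indexed by the fiber of π over F; and (b) the map of reductions from E(F,∂F) to the reduction of E(F) is surjective in top degree 2·rk F. -/

import Mathlib

/-!
A face `S ⊆ F` of the matroid complex lies in a smaller flat exactly when `|S| < rk F` (move a
point of `H_F` along a direction vanishing on `S` but not on `F`), so the costalk ideal is the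
face ideal of the `(rk F - 1)`-skeleton, and modulo the stalk ideal it is generated by the
monomials `e_B` of the bases `B` of `F`. For `j ∈ B` the linear form of the dual vector of `j`
is `e_j` plus variables outside `B`, all of which kill `e_B` in `E(F)`; hence
`E(F) e_B = A_H(F) e_B`. Setting the variables outside `B` to zero fixes `e_B`, kills the other
basis monomials and is injective on `A_H(F)`, which gives freeness. For (b), the same rewriting
of `e_k` modulo linear forms enlarges the support of a monomial of degree `rk F` until it is a
basis monomial or leaves the matroid complex.
-/

open MvPolynomial
set_option synthInstance.maxHeartbeats 1000000
set_option maxHeartbeats 1000000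

variable {I : Type} [Fintype I] [DecidableEq I]

def IsFlat (V : AffineSubspace ℝ (I → ℝ)) (F : Finset I) : Prop :=
  ∃ x ∈ V, ∀ i : I, i ∈ F ↔ x i = 0

def Essential (V : AffineSubspace ℝ (I → ℝ)) : Prop :=
  ∀ i : I, ∃ x ∈ V, ∃ y ∈ V, x i ≠ y i

noncomputable def resF (V : AffineSubspace ℝ (I → ℝ)) (F : Finset I) :
    V.direction →ₗ[ℝ] ({i : I // i ∈ F} → ℝ) :=
  (LinearMap.funLeft ℝ ℝ (fun i : {i : I // i ∈ F} => (i : I))).comp V.direction.subtype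

/-- `S` is a face of the matroid complex of the arrangement (equivalently, of its
simplification `H̃`). -/
def Face (V : AffineSubspace ℝ (I → ℝ)) (S : Finset I) : Prop :=
  Function.Surjective (resF V S)

/-- The rank of a flat `F` (the codimension of `H_F`). -/
noncomputable def rkF (V : AffineSubspace ℝ (I → ℝ)) (F : Finset I) : ℕ :=
  Module.finrank ℝ (LinearMap.range (resF V F))

noncomputable def faceIdeal (Δ : Set (Finset I)) : Ideal (MvPolynomial I ℝ) :=
  Ideal.span {p | ∃ S : Finset I, S ∉ Δ ∧ p = ∏ i ∈ S, (X i : MvPolynomial I ℝ)}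

/-- The defining ideal of the stalk `E(F) = ℝ[Δ_{H̃_F}]` of `E = π_* A_{H̃}`: the face
ideal of the matroid complex of the localization at `F` (faces = independent subsets
of `F`). -/
noncomputable def locFaceIdeal (V : AffineSubspace ℝ (I → ℝ)) (F : Finset I) :
    Ideal (MvPolynomial I ℝ) :=
  faceIdeal {S | S ⊆ F ∧ Face V S}

/-- The stalk `E(F) = ℝ[Δ_{H̃_F}]`. -/
abbrev EStalk (V : AffineSubspace ℝ (I → ℝ)) (F : Finset I) : Type :=
  MvPolynomial I ℝ ⧸ locFaceIdeal V F

/-- The copy of `A_H(F) = Sym V(F)` inside `E(F)`: the subalgebra generated by the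
images of the linear forms `∑_{i∈F} v_i e_i`, `v ∈ V₀`. -/
noncomputable def AF (V : AffineSubspace ℝ (I → ℝ)) (F : Finset I) :
    Subalgebra ℝ (EStalk V F) :=
  Algebra.adjoin ℝ ((Ideal.Quotient.mk (locFaceIdeal V F)) ''
    {p | ∃ v ∈ V.direction, p = ∑ i ∈ F, v i • (X i : MvPolynomial I ℝ)})

/-- The preimage in `ℝ[e_i : i ∈ I]` of the costalk `E(F, ∂F)`: polynomials mapping to
zero in every stalk `E(E)` for flats `E < F`. -/
noncomputable def costalkIdeal (V : AffineSubspace ℝ (I → ℝ)) (F : Finset I) :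
    Ideal (MvPolynomial I ℝ) :=
  ⨅ (E : Finset I) (_ : IsFlat V E ∧ E ⊂ F), locFaceIdeal V E

/-- The costalk `E(F, ∂F)` as an `A_H(F)`-submodule of `E(F)`. -/
noncomputable def costalkSub (V : AffineSubspace ℝ (I → ℝ)) (F : Finset I) :
    Submodule (AF V F) (EStalk V F) :=
  Submodule.restrictScalars (AF V F)
    (((costalkIdeal V F).map (Ideal.Quotient.mk (locFaceIdeal V F)) :
        Ideal (EStalk V F)) : Submodule (EStalk V F) (EStalk V F))

/-- The ideal generated by the linear forms from `V(F)`. -/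
noncomputable def linIdeal (V : AffineSubspace ℝ (I → ℝ)) (F : Finset I) :
    Ideal (MvPolynomial I ℝ) :=
  Ideal.span {p | ∃ v ∈ V.direction, p = ∑ i ∈ F, v i • (X i : MvPolynomial I ℝ)}

open Finset Function LinearMap

section Matroid

variable {V : AffineSubspace ℝ (I → ℝ)} {S T : Finset I}

omit [Fintype I] [DecidableEq I] in
theorem resF_eq_funLeft_comp (hST : S ⊆ T) :
    resF V S = funLeft ℝ ℝ (fun i : S => (⟨i, hST i.2⟩ : T)) ∘ₗ resF V T :=
  rfl

omit [Fintype I] [DecidableEq I] in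
theorem mem_ker_resF {w : V.direction} : w ∈ ker (resF V S) ↔ ∀ i ∈ S, (w : I → ℝ) i = 0 := by
  simp [resF, funext_iff]

omit [Fintype I] [DecidableEq I] in
theorem Face.mono (hT : Face V T) (hST : S ⊆ T) : Face V S := by
  rw [Face, resF_eq_funLeft_comp hST, coe_comp]
  exact (funLeft_surjective_of_injective _ _ _ fun i j h => Subtype.ext (by simpa using h)).comp hT

omit [Fintype I] [DecidableEq I] in
theorem face_empty : Face V ∅ := surjective_to_subsingleton _

omit [Fintype I] [DecidableEq I] in
theorem ker_resF_le (hST : S ⊆ T) : ker (resF V T) ≤ ker (resF V S) := by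
  rw [resF_eq_funLeft_comp hST]
  exact ker_le_ker_comp _ _

omit [DecidableEq I] in
theorem rkF_le_of_ker_le (h : ker (resF V T) ≤ ker (resF V S)) : rkF V S ≤ rkF V T := by
  have := Submodule.finrank_mono h
  have := finrank_range_add_finrank_ker (resF V S)
  have := finrank_range_add_finrank_ker (resF V T)
  unfold rkF
  omega

omit [DecidableEq I] in
theorem ker_resF_eq_of_rkF_le (hST : S ⊆ T) (h : rkF V T ≤ rkF V S) :
    ker (resF V T) = ker (resF V S) := by
  refine Submodule.eq_of_le_of_finrank_le (ker_resF_le hST) ?_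
  have := finrank_range_add_finrank_ker (resF V S)
  have := finrank_range_add_finrank_ker (resF V T)
  unfold rkF at h
  omega

omit [Fintype I] [DecidableEq I] in
theorem Face.rkF_eq_card (hS : Face V S) : rkF V S = S.card := by
  rw [rkF, range_eq_top.mpr hS, finrank_top, Module.finrank_fintype_fun_eq_card,
    Fintype.card_coe]

omit [DecidableEq I] in
theorem Face.card_le_rkF (hS : Face V S) (hST : S ⊆ T) : S.card ≤ rkF V T :=
  hS.rkF_eq_card ▸ rkF_le_of_ker_le (ker_resF_le hST)

omit [Fintype I] in
theorem Face.exists_dual {k : I} (hS : Face V S) (hk : k ∈ S) :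
    ∃ v ∈ V.direction, v k = 1 ∧ ∀ i ∈ S, i ≠ k → v i = 0 := by
  obtain ⟨v, hv⟩ := hS (Pi.single ⟨k, hk⟩ 1)
  refine ⟨v, v.2, by simpa [resF] using congrFun hv ⟨k, hk⟩, fun i hi hik => ?_⟩
  simpa [resF, hik] using congrFun hv ⟨i, hi⟩

end Matroid

section Flats

variable {V : AffineSubspace ℝ (I → ℝ)} {S E F : Finset I}

omit [DecidableEq I] in
theorem Face.card_lt_rkF_of_subset_flat (hS : Face V S) (hF : IsFlat V F) (hE : IsFlat V E)
    (hEF : E ⊂ F) (hSE : S ⊆ E) : S.card < rkF V F := by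
  by_contra! hle
  obtain ⟨x, hxV, hx⟩ := hF
  obtain ⟨y, hyV, hy⟩ := hE
  have hw : (⟨x - y, AffineSubspace.vsub_mem_direction hxV hyV⟩ : V.direction) ∈
      ker (resF V S) :=
    mem_ker_resF.2 fun i hi => by simp [(hx i).1 (hEF.subset (hSE hi)), (hy i).1 (hSE hi)]
  rw [← ker_resF_eq_of_rkF_le (hSE.trans hEF.subset) (hS.rkF_eq_card ▸ hle), mem_ker_resF] at hw
  obtain ⟨j, hjF, hjE⟩ := exists_of_ssubset hEF
  exact hjE ((hy j).2 (by simpa [(hx j).1 hjF] using hw j hjF))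

omit [DecidableEq I] in
theorem exists_ne_zero_forall_add_mul_eq_zero_iff (x w : I → ℝ) :
    ∃ t : ℝ, t ≠ 0 ∧ ∀ i, x i + t * w i = 0 ↔ x i = 0 ∧ w i = 0 := by
  classical
  obtain ⟨t, ht⟩ := Infinite.exists_notMem_finset (insert 0 (univ.image fun i => -x i / w i))
  simp only [mem_insert, mem_image, mem_univ, true_and, not_or, not_exists] at ht
  refine ⟨t, ht.1, fun i => ⟨fun h => ?_, fun h => by simp [h]⟩⟩
  by_cases hwi : w i = 0
  · simp_all
  · exact absurd (by field_simp; linarith) (ht.2 i)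

omit [DecidableEq I] in
theorem Face.exists_flat_of_card_lt_rkF (hS : Face V S) (hF : IsFlat V F) (hSF : S ⊆ F)
    (hlt : S.card < rkF V F) : ∃ E, IsFlat V E ∧ E ⊂ F ∧ S ⊆ E := by
  have hker : ¬ ker (resF V S) ≤ ker (resF V F) := fun h =>
    (rkF_le_of_ker_le h).not_gt (hS.rkF_eq_card ▸ hlt)
  obtain ⟨w, hwS, hwF⟩ := SetLike.not_le_iff_exists.1 hker
  rw [mem_ker_resF] at hwS hwF
  obtain ⟨j, hjF, hj⟩ := not_forall₂.1 hwF
  obtain ⟨x, hxV, hx⟩ := hF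
  obtain ⟨t, ht0, ht⟩ := exists_ne_zero_forall_add_mul_eq_zero_iff x w
  refine ⟨F.filter fun i => (w : I → ℝ) i = 0,
    ⟨t • (w : I → ℝ) +ᵥ x, AffineSubspace.vadd_mem_of_mem_direction
      (Submodule.smul_mem _ t w.2) hxV, fun i => ?_⟩,
    filter_ssubset.2 ⟨j, hjF, hj⟩, fun i hi => mem_filter.2 ⟨hSF hi, hwS i hi⟩⟩
  simp only [mem_filter, hx, vadd_eq_add, Pi.add_apply, Pi.smul_apply, smul_eq_mul]
  rw [add_comm, ht]

/-- The faces of the `(rk F - 1)`-skeleton of the matroid complex of the localization at `F`. -/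
def skeletonFaces (V : AffineSubspace ℝ (I → ℝ)) (F : Finset I) : Set (Finset I) :=
  {S | S ⊆ F ∧ Face V S ∧ S.card < rkF V F}

omit [DecidableEq I] in
theorem exists_flat_ssubset_iff (hF : IsFlat V F) :
    (∃ E, (IsFlat V E ∧ E ⊂ F) ∧ S ⊆ E ∧ Face V S) ↔ S ∈ skeletonFaces V F := by
  constructor
  · rintro ⟨E, ⟨hE, hEF⟩, hSE, hS⟩
    exact ⟨hSE.trans hEF.subset, hS, hS.card_lt_rkF_of_subset_flat hF hE hEF hSE⟩
  · rintro ⟨hSF, hS, hlt⟩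
    obtain ⟨E, hE, hEF, hSE⟩ := hS.exists_flat_of_card_lt_rkF hF hSF hlt
    exact ⟨E, ⟨hE, hEF⟩, hSE, hS⟩

end Flats

section FaceIdeal

variable {Δ Δ' : Set (Finset I)}

omit [Fintype I] [DecidableEq I] in
theorem prod_X_eq_monomial (S : Finset I) :
    ∏ i ∈ S, (X i : MvPolynomial I ℝ) = monomial (∑ i ∈ S, Finsupp.single i 1) 1 :=
  (monomial_sum_one S _).symm

omit [Fintype I] in
theorem sum_single_one_le_iff {S : Finset I} {c : I →₀ ℕ} :
    ∑ i ∈ S, Finsupp.single i 1 ≤ c ↔ S ⊆ c.support := by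
  rw [← Finsupp.orderIsoMultiset.le_iff_le, Finsupp.coe_orderIsoMultiset,
    Finsupp.toMultiset_sum_single, one_nsmul, Multiset.le_iff_subset S.nodup]
  simp [Finset.subset_iff, Multiset.subset_iff]

omit [Fintype I] [DecidableEq I] in
theorem faceIdeal_eq_span_monomial (Δ : Set (Finset I)) :
    faceIdeal Δ = Ideal.span ((fun s => monomial s (1 : ℝ)) ''
      ((fun S => ∑ i ∈ S, Finsupp.single i 1) '' Δᶜ)) := by
  rw [Set.image_image, faceIdeal]
  congr 1
  ext p
  simp [prod_X_eq_monomial, eq_comm]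

omit [Fintype I] in
theorem mem_faceIdeal_iff (hΔ : ∀ ⦃S T⦄, S ⊆ T → T ∈ Δ → S ∈ Δ) {p : MvPolynomial I ℝ} :
    p ∈ faceIdeal Δ ↔ ∀ c ∈ p.support, c.support ∉ Δ := by
  simp only [faceIdeal_eq_span_monomial, mem_ideal_span_monomial_image, Set.mem_image,
    Set.mem_compl_iff, exists_exists_and_eq_and, sum_single_one_le_iff]
  exact forall₂_congr fun c _ => ⟨fun ⟨S, hS, hSc⟩ hc => hS (hΔ hSc hc),
    fun hc => ⟨c.support, hc, subset_rfl⟩⟩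

omit [Fintype I] [DecidableEq I] in
theorem prod_X_mem_faceIdeal {S : Finset I} (hS : S ∉ Δ) :
    ∏ i ∈ S, (X i : MvPolynomial I ℝ) ∈ faceIdeal Δ :=
  Ideal.subset_span ⟨S, hS, rfl⟩

omit [Fintype I] [DecidableEq I] in
theorem faceIdeal_anti (h : Δ ⊆ Δ') : faceIdeal Δ' ≤ faceIdeal Δ :=
  Ideal.span_mono fun _ ⟨S, hS, hp⟩ => ⟨S, fun hS' => hS (h hS'), hp⟩

end FaceIdeal

section Costalk

variable {V : AffineSubspace ℝ (I → ℝ)} {F : Finset I}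

omit [Fintype I] [DecidableEq I] in
theorem locFaces_downward_closed ⦃S T : Finset I⦄ (hST : S ⊆ T)
    (hT : T ∈ {S | S ⊆ F ∧ Face V S}) : S ∈ {S | S ⊆ F ∧ Face V S} :=
  ⟨hST.trans hT.1, hT.2.mono hST⟩

omit [Fintype I] [DecidableEq I] in
theorem skeletonFaces_downward_closed ⦃S T : Finset I⦄ (hST : S ⊆ T)
    (hT : T ∈ skeletonFaces V F) : S ∈ skeletonFaces V F :=
  ⟨hST.trans hT.1, hT.2.1.mono hST, (card_le_card hST).trans_lt hT.2.2⟩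

theorem costalkIdeal_eq_faceIdeal (hF : IsFlat V F) :
    costalkIdeal V F = faceIdeal (skeletonFaces V F) := by
  ext p
  simp only [costalkIdeal, Submodule.mem_iInf, locFaceIdeal,
    mem_faceIdeal_iff locFaces_downward_closed, mem_faceIdeal_iff skeletonFaces_downward_closed,
    ← exists_flat_ssubset_iff hF]
  exact ⟨fun h c hc ⟨E, hE, hcE⟩ => h E hE c hc hcE, fun h E hE c hc hcE => h c hc ⟨E, hE, hcE⟩⟩

omit [Fintype I] [DecidableEq I] in
theorem prod_X_mem_locFaceIdeal {S : Finset I} (hS : ¬(S ⊆ F ∧ Face V S)) :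
    ∏ i ∈ S, (X i : MvPolynomial I ℝ) ∈ locFaceIdeal V F :=
  prod_X_mem_faceIdeal hS

theorem locFaceIdeal_le_costalkIdeal (hF : IsFlat V F) : locFaceIdeal V F ≤ costalkIdeal V F :=
  costalkIdeal_eq_faceIdeal hF ▸ faceIdeal_anti fun _ hS => ⟨hS.1, hS.2.1⟩

/-- The fiber `π⁻¹(F)`: the bases of the localization at `F`. -/
abbrev Fiber (V : AffineSubspace ℝ (I → ℝ)) (F : Finset I) : Type :=
  {S : Finset I // S ⊆ F ∧ Face V S ∧ S.card = rkF V F}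

theorem prod_X_mem_costalkIdeal (hF : IsFlat V F) (B : Fiber V F) :
    ∏ i ∈ B.1, (X i : MvPolynomial I ℝ) ∈ costalkIdeal V F :=
  costalkIdeal_eq_faceIdeal hF ▸ prod_X_mem_faceIdeal fun h => h.2.2.ne B.2.2.2

end Costalk

section LinearForms

noncomputable def linForm (F : Finset I) : (I → ℝ) →ₗ[ℝ] MvPolynomial I ℝ where
  toFun v := ∑ i ∈ F, v i • X i
  map_add' v w := by simp only [Pi.add_apply, add_smul, sum_add_distrib]
  map_smul' t v := by simp only [Pi.smul_apply, smul_eq_mul, mul_smul, smul_sum, RingHom.id_apply]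

variable {V : AffineSubspace ℝ (I → ℝ)} {B F : Finset I} {v : I → ℝ}

omit [Fintype I] [DecidableEq I] in
theorem linForm_apply : linForm F v = ∑ i ∈ F, v i • X i := rfl

omit [Fintype I] [DecidableEq I] in
theorem linForm_congr {w : I → ℝ} (h : ∀ i ∈ F, v i = w i) : linForm F v = linForm F w :=
  sum_congr rfl fun i hi => by rw [h i hi]

omit [Fintype I] in
theorem linForm_eq_X_add {k : I} (hBF : B ⊆ F) (hk : k ∈ B) (hvk : v k = 1)
    (hv : ∀ i ∈ B, i ≠ k → v i = 0) : linForm F v = X k + ∑ i ∈ F \ B, v i • X i := by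
  rw [linForm_apply, ← sum_sdiff hBF, sum_eq_single_of_mem k hk fun i hi hik => by
    rw [hv i hi hik, zero_smul], hvk, one_smul, add_comm]

omit [Fintype I] [DecidableEq I] in
theorem linForm_mem_linIdeal (hv : v ∈ V.direction) : linForm F v ∈ linIdeal V F :=
  Ideal.subset_span ⟨v, hv, rfl⟩

omit [Fintype I] [DecidableEq I] in
theorem mk_linForm_mem_AF (hv : v ∈ V.direction) :
    Ideal.Quotient.mk (locFaceIdeal V F) (linForm F v) ∈ AF V F :=
  Algebra.subset_adjoin ⟨_, ⟨v, hv, rfl⟩, rfl⟩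

end LinearForms

section Reduction

variable {V : AffineSubspace ℝ (I → ℝ)} {F : Finset I}

theorem prod_map_X_mul_prod_mem_costalkIdeal_sup_linIdeal (hF : IsFlat V F) (s : Multiset I) :
    ∀ B : Finset I, B ⊆ F → Face V B → Multiset.card s + B.card = rkF V F →
      (s.map X).prod * ∏ i ∈ B, X i ∈ costalkIdeal V F ⊔ linIdeal V F := by
  induction s using Multiset.induction_on with
  | empty =>
    intro B hBF hB hcard
    rw [Multiset.map_zero, Multiset.prod_zero, one_mul]
    exact Ideal.mem_sup_left (prod_X_mem_costalkIdeal hF ⟨B, hBF, hB, by simpa using hcard⟩)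
  | cons k s ih =>
    intro B hBF hB hcard
    rw [Multiset.card_cons] at hcard
    have outside : ∀ i ∉ B, (s.map X).prod * (X i * ∏ j ∈ B, X j) ∈
        costalkIdeal V F ⊔ linIdeal V F := by
      intro i hi
      rw [← prod_insert hi]
      by_cases hface : insert i B ⊆ F ∧ Face V (insert i B)
      · exact ih _ hface.1 hface.2 (by rw [card_insert_of_notMem hi]; omega)
      · exact Ideal.mem_sup_left (Ideal.mul_mem_left _ _
          (locFaceIdeal_le_costalkIdeal hF (prod_X_mem_locFaceIdeal hface)))
    rw [Multiset.map_cons, Multiset.prod_cons, mul_comm (X k), mul_assoc]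
    by_cases hk : k ∈ B
    · obtain ⟨v, hv, hvk, hv0⟩ := hB.exists_dual hk
      rw [eq_sub_of_add_eq (linForm_eq_X_add hBF hk hvk hv0).symm, sub_mul, sum_mul, mul_sub,
        mul_sum]
      refine sub_mem (Ideal.mem_sup_right ?_) (sum_mem fun i hi => ?_)
      · exact Ideal.mul_mem_left _ _ (Ideal.mul_mem_right _ _ (linForm_mem_linIdeal hv))
      · rw [smul_mul_assoc, mul_smul_comm]
        exact Submodule.smul_of_tower_mem _ _ (outside i (mem_sdiff.1 hi).2)
    · exact outside k hk

omit [Fintype I] [DecidableEq I] in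
theorem monomial_eq_prod_map_X (c : I →₀ ℕ) :
    monomial c (1 : ℝ) = (c.toMultiset.map X).prod := by
  rw [Finsupp.toMultiset_map, Finsupp.prod_toMultiset, Finsupp.prod_mapDomain_index
    (fun _ => pow_zero _) (fun _ _ _ => pow_add _ _ _), monomial_eq, C_1, one_mul]

theorem mem_costalkIdeal_sup_linIdeal (hF : IsFlat V F) {p : MvPolynomial I ℝ}
    (hp : p.IsHomogeneous (rkF V F)) : p ∈ costalkIdeal V F ⊔ linIdeal V F := by
  rw [p.as_sum]
  refine sum_mem fun c hc => ?_
  have hcard : Multiset.card c.toMultiset + (∅ : Finset I).card = rkF V F := by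
    simpa [Finsupp.weight_apply, Finsupp.sum] using hp (mem_support_iff.1 hc)
  have hc : monomial c (coeff c p) =
      coeff c p • ((c.toMultiset.map X).prod * ∏ i ∈ (∅ : Finset I), X i) := by
    rw [prod_empty, mul_one, ← monomial_eq_prod_map_X, smul_monomial, smul_eq_mul, mul_one]
  rw [hc]
  exact Submodule.smul_of_tower_mem _ _
    (prod_map_X_mul_prod_mem_costalkIdeal_sup_linIdeal hF _ ∅ (empty_subset F) face_empty hcard)

end Reduction

section Span

variable {V : AffineSubspace ℝ (I → ℝ)} {F : Finset I}

noncomputable def fiberMonomial (V : AffineSubspace ℝ (I → ℝ)) (F : Finset I) (B : Fiber V F) :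
    EStalk V F :=
  Ideal.Quotient.mk (locFaceIdeal V F) (∏ i ∈ B.1, X i)

theorem X_mul_prod_mem_locFaceIdeal (B : Fiber V F) {i : I} (hi : i ∉ B.1) :
    X i * ∏ j ∈ B.1, X j ∈ locFaceIdeal V F := by
  rw [← prod_insert hi]
  refine prod_X_mem_locFaceIdeal fun ⟨hsub, hface⟩ => ?_
  have := hface.card_le_rkF hsub
  rw [card_insert_of_notMem hi, B.2.2.2] at this
  omega

theorem exists_mk_X_mul_fiberMonomial_eq (B : Fiber V F) (j : I) :
    ∃ a ∈ AF V F, Ideal.Quotient.mk _ (X j) * fiberMonomial V F B = a * fiberMonomial V F B := by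
  by_cases hj : j ∈ B.1
  · obtain ⟨v, hv, hvj, hv0⟩ := B.2.2.1.exists_dual hj
    refine ⟨_, mk_linForm_mem_AF hv, ?_⟩
    rw [fiberMonomial, ← map_mul, ← map_mul, linForm_eq_X_add B.2.1 hj hvj hv0, add_mul,
      map_add, left_eq_add, sum_mul, map_sum]
    refine sum_eq_zero fun i hi => ?_
    rw [smul_mul_assoc, Ideal.Quotient.eq_zero_iff_mem]
    exact Submodule.smul_of_tower_mem _ _ (X_mul_prod_mem_locFaceIdeal B (mem_sdiff.1 hi).2)
  · refine ⟨0, zero_mem _, ?_⟩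
    rw [zero_mul, fiberMonomial, ← map_mul, Ideal.Quotient.eq_zero_iff_mem]
    exact X_mul_prod_mem_locFaceIdeal B hj

theorem exists_mk_mul_fiberMonomial_eq (B : Fiber V F) (q : MvPolynomial I ℝ) :
    ∃ a ∈ AF V F, Ideal.Quotient.mk _ q * fiberMonomial V F B = a * fiberMonomial V F B := by
  induction q using MvPolynomial.induction_on with
  | C t => exact ⟨_, Subalgebra.algebraMap_mem _ t, rfl⟩
  | add p q hp hq =>
    obtain ⟨a, ha, hpa⟩ := hp
    obtain ⟨b, hb, hqb⟩ := hq
    exact ⟨a + b, add_mem ha hb, by rw [map_add, add_mul, hpa, hqb, add_mul]⟩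
  | mul_X q j hq =>
    obtain ⟨a, ha, hqa⟩ := hq
    obtain ⟨b, hb, hjb⟩ := exists_mk_X_mul_fiberMonomial_eq B j
    refine ⟨b * a, mul_mem hb ha, ?_⟩
    rw [map_mul, mul_right_comm, hqa, mul_right_comm, mul_assoc, hjb]
    ring

theorem map_costalkIdeal_le_span (hF : IsFlat V F) :
    (costalkIdeal V F).map (Ideal.Quotient.mk _) ≤ Ideal.span (Set.range (fiberMonomial V F)) := by
  rw [costalkIdeal_eq_faceIdeal hF, faceIdeal, Ideal.map_span, Ideal.span_le]
  rintro _ ⟨_, ⟨S, hS, rfl⟩, rfl⟩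
  by_cases hface : S ⊆ F ∧ Face V S
  · have hcard : S.card = rkF V F :=
      (hface.2.card_le_rkF hface.1).antisymm (not_lt.1 fun h => hS ⟨hface.1, hface.2, h⟩)
    exact Ideal.subset_span ⟨⟨S, hface.1, hface.2, hcard⟩, rfl⟩
  · rw [SetLike.mem_coe, Ideal.Quotient.eq_zero_iff_mem.2 (prod_X_mem_locFaceIdeal hface)]
    exact zero_mem _

theorem mem_span_fiberMonomial_of_mem_ideal_span {x : EStalk V F}
    (hx : x ∈ Ideal.span (Set.range (fiberMonomial V F))) :
    x ∈ Submodule.span (AF V F) (Set.range (fiberMonomial V F)) := by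
  classical
  obtain ⟨c, rfl⟩ := Ideal.mem_span_range_iff_exists_fun.1 hx
  refine sum_mem fun B _ => ?_
  obtain ⟨q, hq⟩ := Ideal.Quotient.mk_surjective (c B)
  obtain ⟨a, ha, hqa⟩ := exists_mk_mul_fiberMonomial_eq B q
  rw [← hq, hqa]
  exact Submodule.smul_mem _ (⟨a, ha⟩ : AF V F) (Submodule.subset_span ⟨B, rfl⟩)

theorem costalkSub_eq_span (hF : IsFlat V F) :
    costalkSub V F = Submodule.span (AF V F) (Set.range (fiberMonomial V F)) :=
  le_antisymm
    (fun _ hx => mem_span_fiberMonomial_of_mem_ideal_span (map_costalkIdeal_le_span hF hx))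
    (Submodule.span_le.2 (Set.range_subset_iff.2 fun B =>
      Ideal.mem_map_of_mem _ (prod_X_mem_costalkIdeal hF B)))

end Span

section Independence

variable {V : AffineSubspace ℝ (I → ℝ)} {B F : Finset I}

noncomputable def killOutside (B : Finset I) : MvPolynomial I ℝ →ₐ[ℝ] MvPolynomial I ℝ :=
  aeval fun i => if i ∈ B then X i else 0

omit [Fintype I] in
theorem killOutside_prod_X (S : Finset I) :
    killOutside B (∏ i ∈ S, X i) = if S ⊆ B then ∏ i ∈ S, X i else 0 := by
  rw [killOutside, map_prod]
  split_ifs with h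
  · exact prod_congr rfl fun i hi => by rw [aeval_X, if_pos (h hi)]
  · obtain ⟨i, hiS, hiB⟩ := not_subset.1 h
    exact prod_eq_zero hiS (by rw [aeval_X, if_neg hiB])

omit [Fintype I] in
theorem killOutside_linForm (hBF : B ⊆ F) (v : I → ℝ) :
    killOutside B (linForm F v) = linForm B v := by
  simp only [killOutside, linForm_apply, map_sum, map_smul, aeval_X, smul_ite, smul_zero]
  rw [sum_ite_mem, inter_eq_right.2 hBF]

omit [Fintype I] in
theorem killOutside_eq_zero_of_mem_locFaceIdeal (hB : Face V B) (hBF : B ⊆ F)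
    {p : MvPolynomial I ℝ} (hp : p ∈ locFaceIdeal V F) : killOutside B p = 0 := by
  refine (Ideal.span_le (I := RingHom.ker (killOutside B)) |>.2 ?_) hp
  rintro _ ⟨S, hS, rfl⟩
  rw [SetLike.mem_coe, RingHom.mem_ker, killOutside_prod_X,
    if_neg fun h => hS ⟨h.trans hBF, hB.mono h⟩]

noncomputable def stalkKillOutside (hB : Face V B) (hBF : B ⊆ F) :
    EStalk V F →ₐ[ℝ] MvPolynomial I ℝ :=
  Ideal.Quotient.liftₐ _ (killOutside B) fun _ => killOutside_eq_zero_of_mem_locFaceIdeal hB hBF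

omit [Fintype I] in
theorem stalkKillOutside_mk (hB : Face V B) (hBF : B ⊆ F) (p : MvPolynomial I ℝ) :
    stalkKillOutside hB hBF (Ideal.Quotient.mk _ p) = killOutside B p :=
  rfl

omit [Fintype I] [DecidableEq I] in
theorem aeval_linForm {A : Type*} [CommRing A] [Algebra ℝ A] (f : I → A) (v : I → ℝ) :
    aeval f (linForm B v) = ∑ i ∈ B, v i • f i := by
  simp only [linForm_apply, map_sum, map_smul, aeval_X]

/-- For a basis `B` of `F`, sending `e_j` (`j ∈ B`) to the linear form of the dual vector of `j`
inverts `stalkKillOutside` on `A_H(F)`. -/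
theorem exists_leftInverse_stalkKillOutside (B : Fiber V F) :
    ∃ ψ : MvPolynomial I ℝ →ₐ[ℝ] EStalk V F,
      ∀ a ∈ AF V F, ψ (stalkKillOutside B.2.2.1 B.2.1 a) = a := by
  obtain ⟨L, hL⟩ := (resF V B.1).exists_rightInverse_of_surjective (range_eq_top.2 B.2.2.1)
  let dual : (I → ℝ) →ₗ[ℝ] EStalk V F := (Ideal.Quotient.mkₐ ℝ (locFaceIdeal V F)).toLinearMap ∘ₗ
    linForm F ∘ₗ V.direction.subtype ∘ₗ L ∘ₗ funLeft ℝ ℝ ((↑) : B.1 → I)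
  have dual_apply : ∀ v ∈ V.direction, dual v = Ideal.Quotient.mk _ (linForm F v) := by
    intro v hv
    have hker : L (resF V B.1 ⟨v, hv⟩) - ⟨v, hv⟩ ∈ ker (resF V F) := by
      rw [ker_resF_eq_of_rkF_le B.2.1 (B.2.2.1.rkF_eq_card ▸ B.2.2.2.ge), mem_ker, map_sub,
        ← LinearMap.comp_apply, hL, id_apply, sub_self]
    rw [mem_ker_resF] at hker
    exact congrArg _ (linForm_congr fun i hi => sub_eq_zero.1 (hker i hi))
  have dual_sum : ∀ v : I → ℝ, dual (∑ i ∈ B.1, v i • Pi.single i 1) = dual v := by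
    intro v
    have hB : funLeft ℝ ℝ ((↑) : B.1 → I) (∑ i ∈ B.1, v i • Pi.single i 1) =
        funLeft ℝ ℝ (↑) v := by
      ext ⟨i, hi⟩
      simp [Finset.sum_apply, Pi.single_apply, hi]
    simp only [dual, LinearMap.coe_comp, Function.comp_apply, hB]
  refine ⟨aeval fun j => dual (Pi.single j 1), fun a ha => ?_⟩
  refine (AlgHom.eqOn_adjoin_iff (φ := (aeval _).comp (stalkKillOutside B.2.2.1 B.2.1))
    (ψ := AlgHom.id ℝ _)).2 ?_ ha
  rintro _ ⟨_, ⟨v, hv, rfl⟩, rfl⟩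
  rw [AlgHom.comp_apply, AlgHom.id_apply, ← linForm_apply, stalkKillOutside_mk,
    killOutside_linForm B.2.1, aeval_linForm, ← dual_apply v hv, ← dual_sum]
  simp only [map_sum, map_smul]

theorem linearIndependent_fiberMonomial :
    LinearIndependent (AF V F) (fiberMonomial V F) := by
  rw [linearIndependent_iff']
  intro s g hg B hB
  obtain ⟨ψ, hψ⟩ := exists_leftInverse_stalkKillOutside B
  have hkill : ∀ S : Fiber V F, stalkKillOutside B.2.2.1 B.2.1 (fiberMonomial V F S) =
      if S = B then ∏ i ∈ B.1, X i else 0 := by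
    intro S
    rw [fiberMonomial, stalkKillOutside_mk, killOutside_prod_X]
    by_cases hSB : S = B
    · simp [hSB]
    · rw [if_neg hSB, if_neg fun h => hSB (Subtype.ext (eq_of_subset_of_card_le h
        (by rw [S.2.2.2, B.2.2.2])))]
  have h := congrArg (stalkKillOutside B.2.2.1 B.2.1) hg
  simp only [map_sum, Subalgebra.smul_def, smul_eq_mul, map_mul, hkill, mul_ite, mul_zero,
    sum_ite_eq', if_pos hB, map_zero] at h
  have hB0 : stalkKillOutside B.2.2.1 B.2.1 (g B) = 0 :=
    (mul_eq_zero.1 h).resolve_right (prod_ne_zero_iff.2 fun i _ => X_ne_zero i)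
  exact Subtype.ext (by rw [← hψ _ (g B).2, hB0, map_zero, ZeroMemClass.coe_zero])

end Independence

theorem stmt19_general (V : AffineSubspace ℝ (I → ℝ))
    (F : Finset I) (hF : IsFlat V F) :
    (∃ b : Module.Basis {S : Finset I // S ⊆ F ∧ Face V S ∧ S.card = rkF V F}
        (AF V F) (costalkSub V F),
      ∀ S : {S : Finset I // S ⊆ F ∧ Face V S ∧ S.card = rkF V F},
        ((b S : costalkSub V F) : EStalk V F) =
        Ideal.Quotient.mk (locFaceIdeal V F) (∏ i ∈ S.1, (X i : MvPolynomial I ℝ))) ∧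
    (∀ p : MvPolynomial I ℝ, p.IsHomogeneous (rkF V F) →
      p ∈ costalkIdeal V F ⊔ linIdeal V F) :=
  ⟨⟨(Module.Basis.span linearIndependent_fiberMonomial).map
      (LinearEquiv.ofEq _ _ (costalkSub_eq_span hF).symm),
    fun B => by simp [Module.Basis.span_apply, fiberMonomial]⟩,
   fun _ => mem_costalkIdeal_sup_linIdeal hF⟩

/-- for any flat `F` of `H`, (a) the costalk `E(F, ∂F)` of
`E = π_* A_{H̃}` is a free `A_H(F)`-module generated in degree `2 rk F`, with basis
the monomials `e_S` indexed by the fiber `π^{-1}(F)` (the independent subsets `S ⊆ F`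
with `|S| = rk F`); and (b) the map of reductions `E(F,∂F)‾ → E(F)‾` is surjective in
the top degree `2 rk F`: every homogeneous polynomial of degree `rk F` lies in the
costalk ideal plus the ideal of linear forms from `V(F)`. -/
theorem stmt19 (V : AffineSubspace ℝ (I → ℝ))
    (hne : (V : Set (I → ℝ)).Nonempty) (hess : Essential V)
    (F : Finset I) (hF : IsFlat V F) :
    (∃ b : Module.Basis {S : Finset I // S ⊆ F ∧ Face V S ∧ S.card = rkF V F}
        (AF V F) (costalkSub V F),
      ∀ S : {S : Finset I // S ⊆ F ∧ Face V S ∧ S.card = rkF V F},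
        ((b S : costalkSub V F) : EStalk V F) =
        Ideal.Quotient.mk (locFaceIdeal V F) (∏ i ∈ S.1, (X i : MvPolynomial I ℝ))) ∧
    (∀ p : MvPolynomial I ℝ, p.IsHomogeneous (rkF V F) →
      p ∈ costalkIdeal V F ⊔ linIdeal V F) :=
  stmt19_general V F hF
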